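/- arXiv:1803.11304 — 8 statements merged into one kernel-verified Lean document; each statement's English description precedes it below -/
import Mathlib

section
/- Let A and B be symmetric n×n real matrices and I = [a,b] a compact interval. If for every x in R^n \ {0} there exists γ_x in I such that xᵀ(A + γ_x B)x > 0, then there exists γ* in I such that xᵀ(A + γ* B)x > 0 for all x in R^n \ {0}. -/
open scoped Matrix

/-- Definite separation: if for every nonzero `x` there is `γ ∈ [a,b]` with
`xᵀ(A + γB)x > 0`, then a single `γ*` works for all nonzero `x`. -/
theorem definite_separation {n : ℕ} (a b : ℝ) (hab : a ≤ b)
    (A B : Matrix (Fin n) (Fin n) ℝ) (hA : A.IsSymm) (hB : B.IsSymm)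
    (h : ∀ x : Fin n → ℝ, x ≠ 0 → ∃ γ ∈ Set.Icc a b,
      0 < x ⬝ᵥ ((A + γ • B) *ᵥ x)) :
    ∃ γ ∈ Set.Icc a b, ∀ x : Fin n → ℝ, x ≠ 0 →
      0 < x ⬝ᵥ ((A + γ • B) *ᵥ x) := by
  classical
  set f : (Fin n → ℝ) → ℝ := fun x => x ⬝ᵥ (A *ᵥ x) with hf_def
  set g : (Fin n → ℝ) → ℝ := fun x => x ⬝ᵥ (B *ᵥ x) with hg_def
  set Q : ℝ → (Fin n → ℝ) → ℝ := fun γ x => f x + γ * g x with hQ_def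
  have hq : ∀ (γ : ℝ) (x : Fin n → ℝ), x ⬝ᵥ ((A + γ • B) *ᵥ x) = Q γ x := by
    intro γ x
    simp [hQ_def, hf_def, hg_def, Matrix.add_mulVec, Matrix.smul_mulVec,
      dotProduct_add, dotProduct_smul]
  have h' : ∀ x : Fin n → ℝ, x ≠ 0 → ∃ γ ∈ Set.Icc a b, 0 < Q γ x := by
    intro x hx
    obtain ⟨γ, hγ, hp⟩ := h x hx
    exact ⟨γ, hγ, by rwa [hq] at hp⟩
  -- scaling
  have hsc : ∀ (M : Matrix (Fin n) (Fin n) ℝ) (c : ℝ) (v : Fin n → ℝ),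
      (c • v) ⬝ᵥ (M *ᵥ (c • v)) = c ^ 2 * (v ⬝ᵥ (M *ᵥ v)) := by
    intro M c v
    simp [Matrix.mulVec_smul, smul_dotProduct, dotProduct_smul]
    ring
  have hgsc : ∀ (c : ℝ) (v : Fin n → ℝ), g (c • v) = c ^ 2 * g v := fun c v => hsc B c v
  have hQsc : ∀ (γ c : ℝ) (v : Fin n → ℝ), Q γ (c • v) = c ^ 2 * Q γ v := by
    intro γ c v
    simp only [hQ_def, hf_def, hg_def, hsc]
    ring
  -- continuity
  have hgc : Continuous g := by
    simp only [hg_def, dotProduct, Matrix.mulVec]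
    fun_prop
  have hfc : Continuous f := by
    simp only [hf_def, dotProduct, Matrix.mulVec]
    fun_prop
  -- bilinear expansion
  have hbil : ∀ (M : Matrix (Fin n) (Fin n) ℝ) (s t : ℝ) (x y : Fin n → ℝ),
      (s • x + t • y) ⬝ᵥ (M *ᵥ (s • x + t • y)) =
        s ^ 2 * (x ⬝ᵥ (M *ᵥ x)) + t ^ 2 * (y ⬝ᵥ (M *ᵥ y))
          + s * t * (x ⬝ᵥ (M *ᵥ y) + y ⬝ᵥ (M *ᵥ x)) := by
    intro M s t x y
    simp [Matrix.mulVec_add, Matrix.mulVec_smul, dotProduct_add,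
      add_dotProduct, smul_dotProduct, dotProduct_smul]
    ring
  have hQbil : ∀ (γ s t : ℝ) (x y : Fin n → ℝ),
      Q γ (s • x + t • y) =
        s ^ 2 * Q γ x + t ^ 2 * Q γ y
          + s * t * (x ⬝ᵥ ((A + γ • B) *ᵥ y) + y ⬝ᵥ ((A + γ • B) *ᵥ x)) := by
    intro γ s t x y
    rw [← hq, ← hq, ← hq, hbil]
  -- key two-point lemma
  have key : ∀ (γ₀ : ℝ) (x y : Fin n → ℝ), x ≠ 0 → y ≠ 0 → g x ≤ 0 → 0 ≤ g y →
      Q γ₀ x ≤ 0 → Q γ₀ y ≤ 0 → False := by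
    intro γ₀ x y hx hy hgx hgy hQx hQy
    rcases eq_or_lt_of_le hgx with hgx0 | hgx
    · obtain ⟨γ, _, hp⟩ := h' x hx
      have : Q γ x = Q γ₀ x := by simp only [hQ_def, hgx0]; ring
      linarith [this ▸ hp]
    rcases eq_or_lt_of_le hgy with hgy0 | hgy
    · obtain ⟨γ, _, hp⟩ := h' y hy
      have : Q γ y = Q γ₀ y := by simp only [hQ_def, ← hgy0]; ring

      linarith [this ▸ hp]
    -- g x < 0 < g y
    set c : ℝ := x ⬝ᵥ ((A + γ₀ • B) *ᵥ y) + y ⬝ᵥ ((A + γ₀ • B) *ᵥ x) with hc_def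
    set s : ℝ := if c ≤ 0 then 1 else -1 with hs_def
    have hs2 : s ^ 2 = 1 := by
      rcases le_or_gt c 0 with hc | hc <;> simp [hs_def, hc, not_le.mpr] <;> norm_num
    have hsc0 : s * c ≤ 0 := by
      rcases le_or_gt c 0 with hc | hc
      · simp [hs_def, hc]
      · simp [hs_def, not_le.mpr hc]; linarith
    set y' : Fin n → ℝ := s • y with hy'_def
    have hgy' : g y' = g y := by rw [hy'_def, hgsc, hs2, one_mul]
    -- IVT for g along the segment from x to y'
    have hcont : Continuous (fun t : ℝ => g ((1 - t) • x + t • y')) := by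
      apply hgc.comp
      fun_prop
    obtain ⟨t, ht01, htz⟩ : ∃ t ∈ Set.Icc (0:ℝ) 1, g ((1 - t) • x + t • y') = 0 := by
      have h0 : g ((1 - (0:ℝ)) • x + (0:ℝ) • y') = g x := by norm_num
      have h1 : g ((1 - (1:ℝ)) • x + (1:ℝ) • y') = g y := by
        rw [← hgy']; norm_num
      have := intermediate_value_Icc (by norm_num : (0:ℝ) ≤ 1) hcont.continuousOn
      have hmem : (0:ℝ) ∈ Set.Icc (g ((1 - (0:ℝ)) • x + (0:ℝ) • y'))
          (g ((1 - (1:ℝ)) • x + (1:ℝ) • y')) := by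
        rw [h0, h1]; exact ⟨le_of_lt hgx, le_of_lt hgy⟩
      obtain ⟨t, ht, htz⟩ := this hmem
      exact ⟨t, ht, htz⟩
    set z : Fin n → ℝ := (1 - t) • x + t • y' with hz_def
    have hgz : g z = 0 := htz
    have hzq : Q γ₀ z ≤ 0 := by
      have hQy' : Q γ₀ y' = Q γ₀ y := by rw [hy'_def, hQsc, hs2, one_mul]
      have hcross : x ⬝ᵥ ((A + γ₀ • B) *ᵥ y') + y' ⬝ᵥ ((A + γ₀ • B) *ᵥ x) = s * c := by
        simp only [hy'_def, hc_def, Matrix.mulVec_smul, dotProduct_smul,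
          smul_dotProduct, smul_eq_mul]
        ring
      rw [hz_def, hQbil, hcross, hQy']
      have h1t : (0:ℝ) ≤ 1 - t := by linarith [ht01.2]
      have h2 : (0:ℝ) ≤ t := ht01.1
      nlinarith [sq_nonneg (1 - t), sq_nonneg t, mul_nonneg h1t h2]
    have hz0 : z ≠ 0 := by
      intro hz0
      have hxy : (1 - t) • x = (-(t * s)) • y := by
        have : (1 - t) • x = -(t • y') := by
          rw [eq_neg_iff_add_eq_zero]; rw [hz_def] at hz0; exact hz0
        rw [this, hy'_def, smul_smul, neg_smul]
      have heq : (1 - t) ^ 2 * g x = (t * s) ^ 2 * g y := by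
        have := congrArg g hxy
        rwa [hgsc, hgsc, neg_sq] at this
      have hle : (1 - t) ^ 2 * g x ≤ 0 :=
        mul_nonpos_of_nonneg_of_nonpos (sq_nonneg _) (le_of_lt hgx)
      have hge : (0:ℝ) ≤ (t * s) ^ 2 * g y := mul_nonneg (sq_nonneg _) (le_of_lt hgy)
      have h10 : (1 - t) ^ 2 * g x = 0 := le_antisymm hle (heq ▸ hge)
      have ht1 : t = 1 := by
        rcases mul_eq_zero.mp h10 with h0 | h0
        · have h0' : 1 - t = 0 := by
            exact pow_eq_zero_iff (two_ne_zero) |>.mp h0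
          linarith
        · exact absurd h0 (ne_of_lt hgx)
      have h20 : (t * s) ^ 2 * g y = 0 := by rw [← heq, h10]
      have hts0 : t * s = 0 := by
        rcases mul_eq_zero.mp h20 with h0 | h0
        · exact pow_eq_zero_iff (two_ne_zero) |>.mp h0
        · exact absurd h0 (ne_of_gt hgy)
      rw [ht1, one_mul] at hts0
      rw [hts0] at hs2
      norm_num at hs2
    obtain ⟨γ, _, hp⟩ := h' z hz0
    have : Q γ z = Q γ₀ z := by simp only [hQ_def, hgz]; ring
    linarith [this ▸ hp]
  -- the two bad sets on the unit sphere
  set T : Set ℝ := {γ | γ ∈ Set.Icc a b ∧ ∃ x : Fin n → ℝ, ‖x‖ = 1 ∧ 0 ≤ g x ∧ Q γ x ≤ 0}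
    with hT_def
  set S : Set ℝ := {γ | γ ∈ Set.Icc a b ∧ ∃ x : Fin n → ℝ, ‖x‖ = 1 ∧ g x ≤ 0 ∧ Q γ x ≤ 0}
    with hS_def
  have hQc : Continuous (fun p : ℝ × (Fin n → ℝ) => Q p.1 p.2) := by
    simp only [hQ_def]
    exact (hfc.comp continuous_snd).add (continuous_fst.mul (hgc.comp continuous_snd))
  have hTK : IsCompact T := by
    have : T = Prod.fst '' ((Set.Icc a b ×ˢ Metric.sphere (0 : Fin n → ℝ) 1) ∩
        {p : ℝ × (Fin n → ℝ) | 0 ≤ g p.2 ∧ Q p.1 p.2 ≤ 0}) := by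
      ext γ
      constructor
      · rintro ⟨hγ, x, hx1, hgx, hQx⟩
        exact ⟨(γ, x), ⟨⟨hγ, by simpa using hx1⟩, hgx, hQx⟩, rfl⟩
      · rintro ⟨⟨γ', x⟩, ⟨⟨hγ, hx1⟩, hgx, hQx⟩, rfl⟩
        exact ⟨hγ, x, by simpa using hx1, hgx, hQx⟩
    rw [this]
    apply IsCompact.image _ continuous_fst
    apply ((isCompact_Icc).prod (isCompact_sphere _ _)).inter_right
    exact (isClosed_le continuous_const (hgc.comp continuous_snd)).inter
      (isClosed_le hQc continuous_const)
  have hSK : IsCompact S := by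
    have : S = Prod.fst '' ((Set.Icc a b ×ˢ Metric.sphere (0 : Fin n → ℝ) 1) ∩
        {p : ℝ × (Fin n → ℝ) | g p.2 ≤ 0 ∧ Q p.1 p.2 ≤ 0}) := by
      ext γ
      constructor
      · rintro ⟨hγ, x, hx1, hgx, hQx⟩
        exact ⟨(γ, x), ⟨⟨hγ, by simpa using hx1⟩, hgx, hQx⟩, rfl⟩
      · rintro ⟨⟨γ', x⟩, ⟨⟨hγ, hx1⟩, hgx, hQx⟩, rfl⟩
        exact ⟨hγ, x, by simpa using hx1, hgx, hQx⟩
    rw [this]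
    apply IsCompact.image _ continuous_fst
    apply ((isCompact_Icc).prod (isCompact_sphere _ _)).inter_right
    exact (isClosed_le (hgc.comp continuous_snd) continuous_const).inter
      (isClosed_le hQc continuous_const)
  -- reduce conclusion to the unit sphere
  have sphere_suffices : ∀ γ ∈ Set.Icc a b,
      (∀ u : Fin n → ℝ, ‖u‖ = 1 → 0 < Q γ u) →
      ∃ γ ∈ Set.Icc a b, ∀ x : Fin n → ℝ, x ≠ 0 → 0 < x ⬝ᵥ ((A + γ • B) *ᵥ x) := by
    intro γ hγ hall
    refine ⟨γ, hγ, fun x hx => ?_⟩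
    have hxn : ‖x‖ ≠ 0 := norm_ne_zero_iff.mpr hx
    set u : Fin n → ℝ := ‖x‖⁻¹ • x with hu_def
    have hu1 : ‖u‖ = 1 := norm_smul_inv_norm hx
    have hxu : x = ‖x‖ • u := by
      rw [hu_def, smul_smul, mul_inv_cancel₀ hxn, one_smul]
    rw [hq, hxu, hQsc]
    exact mul_pos (by positivity) (hall u hu1)
  -- case analysis
  by_cases hTe : T = ∅
  · apply sphere_suffices a ⟨le_refl a, hab⟩
    intro u hu1
    by_contra hQu
    push_neg at hQu
    have hu0 : u ≠ 0 := fun h0 => by simp [h0] at hu1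
    rcases le_or_gt 0 (g u) with hgu | hgu
    · exact absurd (show a ∈ T from ⟨⟨le_refl a, hab⟩, u, hu1, hgu, hQu⟩) (by simp [hTe])
    · obtain ⟨γ, hγ, hp⟩ := h' u hu0
      have : Q γ u = Q a u + (γ - a) * g u := by simp only [hQ_def]; ring
      nlinarith [hγ.1, mul_nonpos_of_nonneg_of_nonpos (by linarith [hγ.1] : (0:ℝ) ≤ γ - a)
        (le_of_lt hgu)]
  by_cases hSe : S = ∅
  · apply sphere_suffices b ⟨hab, le_refl b⟩
    intro u hu1
    by_contra hQu
    push_neg at hQu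
    have hu0 : u ≠ 0 := fun h0 => by simp [h0] at hu1
    rcases le_or_gt (g u) 0 with hgu | hgu
    · exact absurd (show b ∈ S from ⟨⟨hab, le_refl b⟩, u, hu1, hgu, hQu⟩) (by simp [hSe])
    · obtain ⟨γ, hγ, hp⟩ := h' u hu0
      have : Q γ u = Q b u + (γ - b) * g u := by simp only [hQ_def]; ring
      nlinarith [hγ.2, mul_nonpos_of_nonpos_of_nonneg (by linarith [hγ.2] : γ - b ≤ 0)
        (le_of_lt hgu)]
  -- both nonempty
  have hTne : T.Nonempty := Set.nonempty_iff_ne_empty.mpr hTe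
  have hSne : S.Nonempty := Set.nonempty_iff_ne_empty.mpr hSe
  have ht0 : sSup T ∈ T := hTK.sSup_mem hTne
  have hs0 : sInf S ∈ S := hSK.sInf_mem hSne
  set t0 := sSup T with ht0_def
  set s0 := sInf S with hs0_def
  have hts : t0 < s0 := by
    by_contra hle
    push_neg at hle
    obtain ⟨ht0I, x, hx1, hgx, hQx⟩ := ht0
    obtain ⟨hs0I, y, hy1, hgy, hQy⟩ := hs0
    have hx0 : x ≠ 0 := fun h0 => by simp [h0] at hx1
    have hy0 : y ≠ 0 := fun h0 => by simp [h0] at hy1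
    have hQx' : Q s0 x ≤ 0 := by
      have : Q s0 x = Q t0 x + (s0 - t0) * g x := by simp only [hQ_def]; ring
      rw [this]
      nlinarith [mul_nonpos_of_nonpos_of_nonneg (by linarith : s0 - t0 ≤ 0) hgx]
    exact key s0 y x hy0 hx0 hgy hgx hQy hQx'
  set γ : ℝ := (t0 + s0) / 2 with hγ_def
  have hγI : γ ∈ Set.Icc a b := by
    obtain ⟨ht0I, _⟩ := ht0
    obtain ⟨hs0I, _⟩ := hs0
    constructor
    · have := ht0I.1; rw [hγ_def]; linarith
    · have := hs0I.2; rw [hγ_def]; linarith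
  apply sphere_suffices γ hγI
  intro u hu1
  by_contra hQu
  push_neg at hQu
  rcases le_or_gt 0 (g u) with hgu | hgu
  · have : γ ∈ T := ⟨hγI, u, hu1, hgu, hQu⟩
    have : γ ≤ t0 := le_csSup hTK.bddAbove this
    rw [hγ_def] at this; linarith
  · have : γ ∈ S := ⟨hγI, u, hu1, le_of_lt hgu, hQu⟩
    have : s0 ≤ γ := csInf_le hSK.bddBelow this
    rw [hγ_def] at this; linarith
end

section
/- Let A and B be symmetric n×n real matrices and I = [a,b] a compact interval. If for every x in R^n there exists γ_x in I such that xᵀ(A + γ_x B)x ≥ 0, then there exists γ* in I such that xᵀ(A + γ* B)x ≥ 0 for all x in R^n. -/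
open scoped Matrix

lemma quad_neg (t qx qy w : ℝ) (ht0 : 0 ≤ t) (ht1 : t ≤ 1)
    (hqx : qx < 0) (hqy : qy < 0) (hw : w ≤ 0) :
    (1-t)^2 * qx + (1-t)*t * w + t^2 * qy < 0 := by
  have hw' : (1-t)*t*w ≤ 0 := by
    have := mul_nonneg (mul_nonneg (by linarith : (0:ℝ) ≤ 1-t) ht0) (by linarith : 0 ≤ -w)
    nlinarith
  rcases le_or_gt t (1/2) with hc | hc
  · have hs : (1:ℝ)/4 ≤ (1-t)^2 := by nlinarith
    have h1 : (1-t)^2 * qx ≤ (1/4) * qx := by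
      nlinarith [mul_nonneg (by linarith : (0:ℝ) ≤ (1-t)^2 - 1/4) (by linarith : 0 ≤ -qx)]
    nlinarith [mul_nonneg (sq_nonneg t) (by linarith : 0 ≤ -qy)]
  · have hs : (1:ℝ)/4 ≤ t^2 := by nlinarith
    have h1 : t^2 * qy ≤ (1/4) * qy := by
      nlinarith [mul_nonneg (by linarith : (0:ℝ) ≤ t^2 - 1/4) (by linarith : 0 ≤ -qy)]
    nlinarith [mul_nonneg (sq_nonneg (1-t)) (by linarith : 0 ≤ -qx)]

lemma qsplit {n : ℕ} (A B : Matrix (Fin n) (Fin n) ℝ) (γ : ℝ) (x : Fin n → ℝ) :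
    x ⬝ᵥ ((A + γ • B) *ᵥ x) = x ⬝ᵥ (A *ᵥ x) + γ * (x ⬝ᵥ (B *ᵥ x)) := by
  simp [Matrix.add_mulVec, Matrix.smul_mulVec, dotProduct_add,
    dotProduct_smul, smul_eq_mul]

lemma qexpand {n : ℕ} (M : Matrix (Fin n) (Fin n) ℝ) (x y : Fin n → ℝ) (t : ℝ) :
    ((1-t) • x + t • y) ⬝ᵥ (M *ᵥ ((1-t) • x + t • y)) =
      (1-t)^2 * (x ⬝ᵥ (M *ᵥ x)) + (1-t)*t * (x ⬝ᵥ (M *ᵥ y) + y ⬝ᵥ (M *ᵥ x))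
        + t^2 * (y ⬝ᵥ (M *ᵥ y)) := by
  simp [Matrix.mulVec_add, Matrix.mulVec_smul, dotProduct_add, add_dotProduct,
    dotProduct_smul, smul_dotProduct, smul_eq_mul]
  ring

lemma qneg {n : ℕ} (M : Matrix (Fin n) (Fin n) ℝ) (x y : Fin n → ℝ) :
    (-x) ⬝ᵥ (M *ᵥ (-y)) = x ⬝ᵥ (M *ᵥ y) := by
  simp [Matrix.mulVec_neg, dotProduct_neg, neg_dotProduct]

/-- Core incompatibility lemma. -/
lemma aux_contra {n : ℕ} {a b : ℝ} {A B : Matrix (Fin n) (Fin n) ℝ}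
    (h : ∀ x : Fin n → ℝ, ∃ γ ∈ Set.Icc a b, 0 ≤ x ⬝ᵥ ((A + γ • B) *ᵥ x))
    (x y : Fin n → ℝ) (γ₀ : ℝ)
    (hqx : x ⬝ᵥ ((A + γ₀ • B) *ᵥ x) < 0)
    (hqy : y ⬝ᵥ ((A + γ₀ • B) *ᵥ y) < 0)
    (hw : x ⬝ᵥ ((A + γ₀ • B) *ᵥ y) + y ⬝ᵥ ((A + γ₀ • B) *ᵥ x) ≤ 0)
    (hvx : 0 < x ⬝ᵥ (B *ᵥ x)) (hvy : y ⬝ᵥ (B *ᵥ y) < 0) : False := by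
  obtain ⟨c1, hc1⟩ : ∃ c, c = x ⬝ᵥ (B *ᵥ x) := ⟨_, rfl⟩
  obtain ⟨c2, hc2⟩ : ∃ c, c = x ⬝ᵥ (B *ᵥ y) + y ⬝ᵥ (B *ᵥ x) := ⟨_, rfl⟩
  obtain ⟨c3, hc3⟩ : ∃ c, c = y ⬝ᵥ (B *ᵥ y) := ⟨_, rfl⟩
  have hcont : ContinuousOn (fun t : ℝ => (1-t)^2 * c1 + (1-t)*t * c2 + t^2 * c3)
      (Set.Icc (0:ℝ) 1) := by fun_prop
  have hiv := intermediate_value_Icc' (zero_le_one (α := ℝ)) hcont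
  have hv1 : 0 < c1 := by rw [hc1]; exact hvx
  have hv3 : c3 < 0 := by rw [hc3]; exact hvy
  have h0mem : (0:ℝ) ∈ Set.Icc ((1-(1:ℝ))^2 * c1 + (1-1)*1 * c2 + 1^2 * c3)
      ((1-(0:ℝ))^2 * c1 + (1-0)*0 * c2 + 0^2 * c3) := by
    constructor <;> nlinarith
  obtain ⟨t₀, ht₀, hgt₀⟩ := hiv h0mem
  simp only [] at hgt₀
  have hzB : ((1-t₀) • x + t₀ • y) ⬝ᵥ (B *ᵥ ((1-t₀) • x + t₀ • y)) = 0 := by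
    rw [qexpand, ← hc1, ← hc2, ← hc3]; exact hgt₀
  have hzq : ((1-t₀) • x + t₀ • y) ⬝ᵥ ((A + γ₀ • B) *ᵥ ((1-t₀) • x + t₀ • y)) < 0 := by
    rw [qexpand]
    exact quad_neg t₀ _ _ _ ht₀.1 ht₀.2 hqx hqy hw
  obtain ⟨γ, hγmem, hγ⟩ := h ((1-t₀) • x + t₀ • y)
  rw [qsplit, hzB, mul_zero, add_zero] at hγ
  rw [qsplit, hzB, mul_zero, add_zero] at hzq
  linarith

/-- Key compatibility: left endpoints are ≤ right endpoints. -/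
lemma key_claim {n : ℕ} {a b : ℝ} {A B : Matrix (Fin n) (Fin n) ℝ}
    (h : ∀ x : Fin n → ℝ, ∃ γ ∈ Set.Icc a b, 0 ≤ x ⬝ᵥ ((A + γ • B) *ᵥ x))
    (x y : Fin n → ℝ) (hvx : 0 < x ⬝ᵥ (B *ᵥ x)) (hvy : y ⬝ᵥ (B *ᵥ y) < 0) :
    -(x ⬝ᵥ (A *ᵥ x)) / (x ⬝ᵥ (B *ᵥ x)) ≤ -(y ⬝ᵥ (A *ᵥ y)) / (y ⬝ᵥ (B *ᵥ y)) := by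
  by_contra hcon
  push_neg at hcon
  set γ₀ := (-(x ⬝ᵥ (A *ᵥ x)) / (x ⬝ᵥ (B *ᵥ x)) + -(y ⬝ᵥ (A *ᵥ y)) / (y ⬝ᵥ (B *ᵥ y))) / 2
    with hγ₀
  have hqx : x ⬝ᵥ ((A + γ₀ • B) *ᵥ x) < 0 := by
    rw [qsplit]
    have h1 : γ₀ < -(x ⬝ᵥ (A *ᵥ x)) / (x ⬝ᵥ (B *ᵥ x)) := by rw [hγ₀]; linarith
    have h2 := mul_lt_mul_of_pos_right h1 hvx
    rw [div_mul_cancel₀ _ (ne_of_gt hvx)] at h2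
    linarith
  have hqy : y ⬝ᵥ ((A + γ₀ • B) *ᵥ y) < 0 := by
    rw [qsplit]
    have h1 : -(y ⬝ᵥ (A *ᵥ y)) / (y ⬝ᵥ (B *ᵥ y)) < γ₀ := by rw [hγ₀]; linarith
    have := mul_lt_mul_of_neg_right h1 hvy
    rw [div_mul_cancel₀ _ (ne_of_lt hvy)] at this
    linarith
  rcases le_or_gt (x ⬝ᵥ ((A + γ₀ • B) *ᵥ y) + y ⬝ᵥ ((A + γ₀ • B) *ᵥ x)) 0 with hw | hw
  · exact aux_contra h x y γ₀ hqx hqy hw hvx hvy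
  · refine aux_contra h x (-y) γ₀ hqx ?_ ?_ hvx ?_
    · rw [qneg]; exact hqy
    · simp only [Matrix.mulVec_neg, dotProduct_neg, neg_dotProduct]
      linarith
    · rw [qneg]; exact hvy

/-- Semidefinite separation: if for every `x` there is `γ ∈ [a,b]` with
`xᵀ(A + γB)x ≥ 0`, then a single `γ*` works for all `x`. -/
theorem semidefinite_separation {n : ℕ} (a b : ℝ) (hab : a ≤ b)
    (A B : Matrix (Fin n) (Fin n) ℝ) (hA : A.IsSymm) (hB : B.IsSymm)
    (h : ∀ x : Fin n → ℝ, ∃ γ ∈ Set.Icc a b,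
      0 ≤ x ⬝ᵥ ((A + γ • B) *ᵥ x)) :
    ∃ γ ∈ Set.Icc a b, ∀ x : Fin n → ℝ,
      0 ≤ x ⬝ᵥ ((A + γ • B) *ᵥ x) := by
  set S : Set ℝ := insert a
    ((fun x : Fin n → ℝ => -(x ⬝ᵥ (A *ᵥ x)) / (x ⬝ᵥ (B *ᵥ x))) ''
      {x | 0 < x ⬝ᵥ (B *ᵥ x)}) with hS
  have hne : S.Nonempty := ⟨a, Set.mem_insert a _⟩
  have hub : ∀ γ ∈ S, γ ≤ b := by
    rintro γ (rfl | ⟨x, hx, rfl⟩)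
    · exact hab
    · obtain ⟨γ', ⟨_, hγ'b⟩, hq⟩ := h x
      rw [qsplit] at hq
      have : -(x ⬝ᵥ (A *ᵥ x)) / (x ⬝ᵥ (B *ᵥ x)) ≤ γ' := by
        rw [div_le_iff₀ hx]; linarith
      linarith
  have hbdd : BddAbove S := ⟨b, hub⟩
  refine ⟨sSup S, ⟨le_csSup hbdd (Set.mem_insert a _), csSup_le hne hub⟩, fun x => ?_⟩
  rcases lt_trichotomy (x ⬝ᵥ (B *ᵥ x)) 0 with hv | hv | hv
  · have hr : ∀ γ ∈ S, γ ≤ -(x ⬝ᵥ (A *ᵥ x)) / (x ⬝ᵥ (B *ᵥ x)) := by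
      rintro γ (rfl | ⟨y, hy, rfl⟩)
      · obtain ⟨γ', ⟨hγ'a, _⟩, hq⟩ := h x
        rw [qsplit] at hq
        rw [le_div_iff_of_neg hv]
        nlinarith
      · exact key_claim h y x hy hv
    have hle := csSup_le hne hr
    have := mul_le_mul_of_nonpos_right hle (le_of_lt hv)
    rw [div_mul_cancel₀ _ (ne_of_lt hv)] at this
    rw [qsplit]; linarith
  · obtain ⟨γ', _, hq⟩ := h x
    rw [qsplit, hv, mul_zero, add_zero] at hq
    rw [qsplit, hv, mul_zero, add_zero]
    exact hq
  · have hmem : -(x ⬝ᵥ (A *ᵥ x)) / (x ⬝ᵥ (B *ᵥ x)) ∈ S :=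
      Set.mem_insert_iff.mpr (Or.inr ⟨x, hv, rfl⟩)
    have hle := le_csSup hbdd hmem
    have := mul_le_mul_of_nonneg_right hle (le_of_lt hv)
    rw [div_mul_cancel₀ _ (ne_of_gt hv)] at this
    rw [qsplit]; linarith
end

section
/- Let H_1, ..., H_m be symmetric n×n real matrices such that for every v in R^n, the n×m matrix A_v with columns H_1 v, ..., H_m v has rank at most one. Then there exist real numbers α_1, ..., α_m and a symmetric matrix H in R^{n×n} such that H_j = α_j H for all j = 1, ..., m. -/
/-!
Fix `H j₀ ≠ 0` with an entry `H j₀ r s ≠ 0`. Rank at most one says that `H j₀ v` and `H j v` are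
parallel for every `v`; testing this on `e_p` and `e_p + e_q` gives bilinear identities between the
entries of `H j₀` and `H j`, and together with symmetry they force
`H j₀ r s • H j = H j r s • H j₀`.
-/

open scoped Matrix

namespace Matrix

variable {R : Type*} [CommRing R]

theorem mul_mul_eq_of_rank_le_one [IsDomain R] {m n : Type*} [Fintype n] {M : Matrix m n R}
    (hM : M.rank ≤ 1) (i i' : m) (j k : n) : M i j * M i' k = M i' j * M i k := by
  set S := M.submatrix ![i, i'] ![j, k]
  have hS : S.det = 0 := by
    by_contra hdet
    have := (rank_of_det_ne_zero hdet).symm.trans_le ((M.rank_submatrix_le _ _).trans hM)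
    simp at this
  simp only [S, det_fin_two, submatrix_apply, cons_val_zero, cons_val_one] at hS
  linear_combination hS

section Parallel

variable {n : Type*} [Fintype n] [DecidableEq n] {A B : Matrix n n R}

theorem apply_mul_apply_swap_of_mulVec_parallel
    (hAB : ∀ v i k, (A *ᵥ v) i * (B *ᵥ v) k = (A *ᵥ v) k * (B *ᵥ v) i) (i k p : n) :
    A i p * B k p = A k p * B i p := by
  simpa only [mulVec_single_one, col_apply] using hAB (Pi.single p 1) i k

theorem apply_mul_add_apply_mul_swap_of_mulVec_parallel
    (hAB : ∀ v i k, (A *ᵥ v) i * (B *ᵥ v) k = (A *ᵥ v) k * (B *ᵥ v) i) (i k p q : n) :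
    A i p * B k q + A i q * B k p = A k p * B i q + A k q * B i p := by
  have hpq := hAB (Pi.single p 1 + Pi.single q 1) i k
  simp only [mulVec_add, mulVec_single_one, Pi.add_apply, col_apply] at hpq
  linear_combination hpq - apply_mul_apply_swap_of_mulVec_parallel hAB i k p
    - apply_mul_apply_swap_of_mulVec_parallel hAB i k q

theorem smul_eq_smul_of_mulVec_parallel [IsDomain R] (hA : A.IsSymm) (hB : B.IsSymm)
    (hAB : ∀ v i k, (A *ᵥ v) i * (B *ᵥ v) k = (A *ᵥ v) k * (B *ᵥ v) i)
    {r s : n} (hrs : A r s ≠ 0) : A r s • B = B r s • A := by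
  ext i p
  have hcol : A i s * B r s = A r s * B i s := apply_mul_apply_swap_of_mulVec_parallel hAB i r s
  have hrow : A r p * B r s = A r s * B r p := by
    simpa only [hA.apply, hB.apply] using apply_mul_apply_swap_of_mulVec_parallel hAB p s r
  have hcross := apply_mul_add_apply_mul_swap_of_mulVec_parallel hAB i r p s
  refine mul_left_cancel₀ hrs ?_
  simp only [smul_apply, smul_eq_mul]
  linear_combination (-(A r s)) * hcross + A r p * hcol - A i s * hrow

end Parallel

end Matrix

/-- Rank one columns: if for every `v` the matrix with columns `H j *ᵥ v` has
rank at most one, then all the symmetric matrices `H j` are multiples of a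
single symmetric matrix `H`. -/
theorem rank_one_columns {n m : ℕ} (H : Fin m → Matrix (Fin n) (Fin n) ℝ)
    (hsymm : ∀ j, (H j).IsSymm)
    (hrank : ∀ v : Fin n → ℝ,
      (Matrix.of fun (i : Fin n) (j : Fin m) => (H j *ᵥ v) i).rank ≤ 1) :
    ∃ (α : Fin m → ℝ) (H₀ : Matrix (Fin n) (Fin n) ℝ), H₀.IsSymm ∧
      ∀ j, H j = α j • H₀ := by
  by_cases hzero : ∀ j, H j = 0
  · exact ⟨0, 0, Matrix.isSymm_zero, fun j => by simp [hzero j]⟩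
  obtain ⟨j₀, hj₀⟩ := not_forall.mp hzero
  obtain ⟨r, s, hrs⟩ : ∃ r s, H j₀ r s ≠ 0 := by
    by_contra! h
    exact hj₀ (Matrix.ext h)
  refine ⟨fun j => H j r s / H j₀ r s, H j₀, hsymm j₀, fun j => ?_⟩
  have hpar : ∀ v i k, (H j₀ *ᵥ v) i * (H j *ᵥ v) k = (H j₀ *ᵥ v) k * (H j *ᵥ v) i :=
    fun v i k => Matrix.mul_mul_eq_of_rank_le_one (hrank v) i k j₀ j
  calc H j = (H j₀ r s)⁻¹ • (H j r s • H j₀) := (eq_inv_smul_iff₀ hrs).mpr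
        (Matrix.smul_eq_smul_of_mulVec_parallel (hsymm j₀) (hsymm j) hpar hrs)
    _ = (H j r s / H j₀ r s) • H j₀ := by rw [smul_smul, inv_mul_eq_div]
end

section
/- Let A be a neighborhood of 0 in R^n and h : A → R^{n×m} a C^1 function with h(0) = 0 such that rank(h(x)) ≤ 1 for all x in A. Then for every v in R^n, the n×m matrix whose ℓ-th column is Dh_ℓ(0)·v (where h_ℓ is the ℓ-th column of h) has rank at most one. -/
attribute [local instance] Matrix.normedAddCommGroup Matrix.normedSpace

/-!
The matrices of rank at most one form a closed cone: closed because the condition is the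
vanishing of all `2 × 2` minors, a cone because scaling by a nonzero number preserves rank.
Since `h 0 = 0`, the difference quotients `t⁻¹ • h (t • v)` lie in this cone for small `t ≠ 0`,
and they converge to `Dh(0) v`, whose `ℓ`-th column is `Dh_ℓ(0) v`.
-/

open Filter Topology

namespace Matrix

variable {m n K : Type*} [Fintype n] [Field K]

theorem rank_le_one_iff_mul_eq_mul (M : Matrix m n K) :
    M.rank ≤ 1 ↔ ∀ i j k l, M i k * M j l = M i l * M j k := by
  constructor
  · intro hM i j k l
    have hminor : (M.submatrix ![i, j] ![k, l]).rank ≤ 1 :=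
      (rank_submatrix_le M _ _).trans hM
    by_contra hne
    have hdet : (M.submatrix ![i, j] ![k, l]).det ≠ 0 := by
      rw [det_fin_two]
      simpa [sub_eq_zero] using hne
    rw [rank_of_det_ne_zero hdet, Fintype.card_fin] at hminor
    omega
  · intro hminors
    by_cases hzero : M = 0
    · simp [hzero]
    obtain ⟨i₀, ℓ₀, hpivot⟩ : ∃ i ℓ, M i ℓ ≠ 0 := by
      by_contra! hall
      exact hzero (ext hall)
    -- every column is a multiple of column `ℓ₀`, the factors being read off row `i₀`
    have hrankOne : M = vecMulVec (fun i => M i ℓ₀) (fun ℓ => M i₀ ℓ / M i₀ ℓ₀) := by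
      ext i ℓ
      rw [vecMulVec_apply, mul_div_assoc', eq_div_iff hpivot, hminors i i₀ ℓ ℓ₀]
    rw [hrankOne]
    exact rank_vecMulVec_le _ _

theorem isClosed_setOf_rank_le_one [TopologicalSpace K] [IsTopologicalRing K] [T2Space K] :
    IsClosed {M : Matrix m n K | M.rank ≤ 1} := by
  simp only [rank_le_one_iff_mul_eq_mul, Set.ofPred_forall]
  refine isClosed_iInter fun i => isClosed_iInter fun j => isClosed_iInter fun k =>
    isClosed_iInter fun l => isClosed_eq ?_ ?_ <;> fun_prop

theorem rank_smul_of_ne_zero {c : K} (hc : c ≠ 0) (M : Matrix m n K) :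
    (c • M).rank = M.rank :=
  rank_smul_of_mem_nonZeroDivisors M (mem_nonZeroDivisors_of_ne_zero hc)

end Matrix

section

variable {𝕜 E F : Type*} [NontriviallyNormedField 𝕜] [NormedAddCommGroup E] [NormedSpace 𝕜 E]
  [NormedAddCommGroup F] [NormedSpace 𝕜 F]

theorem HasFDerivAt.apply_mem_of_isClosed_cone {f : E → F} {f' : E →L[𝕜] F} {x : E} {S : Set F}
    (hS : IsClosed S) (hcone : ∀ c : 𝕜, c ≠ 0 → ∀ y ∈ S, c • y ∈ S)
    (hf : HasFDerivAt f f' x) (hfx : f x = 0) (hfS : ∀ᶠ y in 𝓝 x, f y ∈ S) (v : E) :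
    f' v ∈ S := by
  set g : 𝕜 → F := fun t => f (x + t • v)
  have hline : HasDerivAt (fun t : 𝕜 => x + t • v) v 0 := by
    simpa using ((hasDerivAt_id (0 : 𝕜)).smul_const v).const_add x
  have hg : HasDerivAt g (f' v) 0 :=
    (by simpa using hf : HasFDerivAt f f' (x + (0 : 𝕜) • v)).comp_hasDerivAt 0 hline
  have hline_tendsto : Tendsto (fun t : 𝕜 => x + t • v) (𝓝 0) (𝓝 x) := by
    simpa using hline.continuousAt.tendsto
  have hgS : ∀ᶠ t in 𝓝 (0 : 𝕜), g t ∈ S := hline_tendsto.eventually hfS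
  refine hS.mem_of_tendsto (hasDerivAt_iff_tendsto_slope.mp hg) ?_
  filter_upwards [nhdsWithin_le_nhds hgS, self_mem_nhdsWithin] with t ht htne
  rw [slope_def_module, show g 0 = 0 by simpa [g] using hfx, sub_zero, sub_zero]
  exact hcone _ (inv_ne_zero htne) _ ht

theorem Matrix.fderiv_apply_apply {m n : Type*} [Fintype m] [Fintype n]
    {Φ : E → Matrix m n 𝕜} {x : E} (hΦ : DifferentiableAt 𝕜 Φ x) (i : m) (j : n) (v : E) :
    fderiv 𝕜 (fun y => Φ y i j) x v = fderiv 𝕜 Φ x v i j := by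
  let entry : Matrix m n 𝕜 →L[𝕜] 𝕜 :=
    (ContinuousLinearMap.proj j).comp (ContinuousLinearMap.proj i : Matrix m n 𝕜 →L[𝕜] (n → 𝕜))
  exact DFunLike.congr_fun (entry.hasFDerivAt.comp x hΦ.hasFDerivAt).fderiv v

end

/-- Directional derivatives of rank one: if `h` is `C¹` near `0`, `h 0 = 0` and
`rank (h x) ≤ 1` on a neighborhood of `0`, then for every `v` the matrix whose
`ℓ`-th column is `Dh_ℓ(0) v` has rank at most one. -/
theorem directional_derivatives_rank_one {n m : ℕ} (U : Set (Fin n → ℝ))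
    (hU : IsOpen U) (hU0 : (0 : Fin n → ℝ) ∈ U)
    (h : (Fin n → ℝ) → Matrix (Fin n) (Fin m) ℝ)
    (hC1 : ContDiffOn ℝ 1 h U) (h0 : h 0 = 0)
    (hrank : ∀ x ∈ U, (h x).rank ≤ 1) :
    ∀ v : Fin n → ℝ,
      (Matrix.of fun (i : Fin n) (ℓ : Fin m) =>
        fderiv ℝ (fun x => h x i ℓ) 0 v).rank ≤ 1 := by
  intro v
  have hU_nhds : U ∈ 𝓝 0 := hU.mem_nhds hU0
  have hdiff : DifferentiableAt ℝ h 0 :=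
    (hC1.differentiableOn one_ne_zero).differentiableAt hU_nhds
  have hcols : (Matrix.of fun i ℓ => fderiv ℝ (fun x => h x i ℓ) 0 v) = fderiv ℝ h 0 v := by
    ext i ℓ
    exact Matrix.fderiv_apply_apply hdiff i ℓ v
  rw [hcols]
  have hclosed : IsClosed {M : Matrix (Fin n) (Fin m) ℝ | M.rank ≤ 1} :=
    Matrix.isClosed_setOf_rank_le_one
  have hev : ∀ᶠ x in 𝓝 (0 : Fin n → ℝ), h x ∈ {M : Matrix (Fin n) (Fin m) ℝ | M.rank ≤ 1} :=
    Filter.mem_of_superset hU_nhds hrank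
  exact hdiff.hasFDerivAt.apply_mem_of_isClosed_cone hclosed
    (fun c hc M hM => (Matrix.rank_smul_of_ne_zero hc M).trans_le hM) h0 hev v
end

section
/- Let A be a neighborhood of 0 in R^n and c_1, ..., c_m : A → R functions of class C^2 with Dc(0) = 0, where Dc(x) is the m×n Jacobian of c = (c_1,...,c_m). If rank(Dc(x)) ≤ 1 for all x in A, then there exist real numbers α_1, ..., α_m and a symmetric matrix H in R^{n×n} such that the Hessian of c_ℓ at 0 equals α_ℓ H for every ℓ = 1, ..., m. -/
/-!
Let `J x` be the Jacobian matrix of `c` at `x`. Since `J 0 = 0`, the derivative of `J` at `0` in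
a direction `v` is the limit of `t⁻¹ • J (t • v)`, and matrices with vanishing `2 × 2` minors form
a closed cone; so for every `v` the vectors `H_ℓ v` (`H_ℓ` the Hessian of `c_ℓ` at `0`) are
pairwise parallel. For symmetric `A` and `B ≠ 0` with `A v ∥ B v` for all `v`, pick `v₀` with
`⟪v₀, B v₀⟫ ≠ 0` and `A v₀ = μ • B v₀`. Then `C = A - μ • B` kills `v₀`; comparing
`C (v₀ ± w) ∥ B (v₀ ± w)` gives `C w ∥ B v₀`, and `⟪v₀, C w⟫ = ⟪C v₀, w⟫ = 0` forces `C w = 0`.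
-/

open Matrix Filter Topology

/-- The `2 × 2` minors of `(u, w)` vanish; `0` is parallel to every vector. -/
def Parallel {ι R : Type*} [Mul R] (u w : ι → R) : Prop :=
  ∀ i j, u i * w j = u j * w i

theorem Parallel.exists_eq_smul {ι K : Type*} [Field K] {u w : ι → K} (h : Parallel u w)
    (hw : w ≠ 0) : ∃ μ : K, u = μ • w := by
  obtain ⟨j, hj⟩ := Function.ne_iff.mp hw
  refine ⟨u j / w j, funext fun i => ?_⟩
  rw [Pi.smul_apply, smul_eq_mul, div_mul_eq_mul_div, eq_div_iff hj, h i j]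

theorem Parallel.smul {ι R : Type*} [CommRing R] {u w : ι → R} (h : Parallel u w) (a b : R) :
    Parallel (a • u) (b • w) := fun i j => by
  simp only [Pi.smul_apply, smul_eq_mul]
  linear_combination a * b * h i j

theorem Matrix.parallel_of_rank_le_one {m n K : Type*} [Finite m] [Fintype n] [Field K]
    {M : Matrix m n K} (hM : M.rank ≤ 1) (ℓ k : m) : Parallel (M ℓ) (M k) := by
  rw [rank_eq_finrank_span_row, finrank_le_one_iff] at hM
  obtain ⟨v, hv⟩ := hM
  obtain ⟨a, ha⟩ := hv ⟨M ℓ, Submodule.subset_span ⟨ℓ, rfl⟩⟩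
  obtain ⟨b, hb⟩ := hv ⟨M k, Submodule.subset_span ⟨k, rfl⟩⟩
  have ha : M ℓ = a • (v : n → K) := congrArg Subtype.val ha.symm
  have hb : M k = b • (v : n → K) := congrArg Subtype.val hb.symm
  intro i j
  simp only [ha, hb, Pi.smul_apply, smul_eq_mul]
  ring

theorem isClosed_setOf_forall_parallel {ι κ R : Type*} [TopologicalSpace R] [Mul R]
    [ContinuousMul R] [T2Space R] :
    IsClosed {M : ι → κ → R | ∀ ℓ k, Parallel (M ℓ) (M k)} := by
  simp only [Parallel, Set.ofPred_forall]
  exact isClosed_iInter fun ℓ => isClosed_iInter fun k => isClosed_iInter fun i =>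
    isClosed_iInter fun j => isClosed_eq (by fun_prop) (by fun_prop)

theorem HasFDerivAt.apply_mem_of_eventually_mem {𝕜 E F : Type*} [NontriviallyNormedField 𝕜]
    [NormedAddCommGroup E] [NormedSpace 𝕜 E] [NormedAddCommGroup F] [NormedSpace 𝕜 F]
    {f : E → F} {f' : E →L[𝕜] F} {S : Set F} (hf : HasFDerivAt f f' 0) (hf0 : f 0 = 0)
    (hS : IsClosed S) (hS_smul : ∀ (t : 𝕜), ∀ y ∈ S, t • y ∈ S) (hfS : ∀ᶠ x in 𝓝 0, f x ∈ S)
    (v : E) : f' v ∈ S := by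
  have hline : HasDerivAt (fun t : 𝕜 => f (t • v)) (f' v) 0 :=
    hf.comp_hasDerivAt_of_eq 0 (by simpa using (hasDerivAt_id (0 : 𝕜)).smul_const v)
      (zero_smul 𝕜 v).symm
  have hslope := hline.tendsto_slope_zero
  simp only [zero_add, zero_smul, hf0, sub_zero] at hslope
  have hv : Tendsto (fun t : 𝕜 => t • v) (𝓝[≠] 0) (𝓝 0) := by
    simpa using (tendsto_id.smul_const v).mono_left (nhdsWithin_le_nhds (a := (0 : 𝕜)))
  exact hS.mem_of_tendsto hslope <| (hv.eventually hfS).mono fun t ht => hS_smul _ _ ht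

theorem Matrix.IsSymm.exists_dotProduct_mulVec_ne_zero {n R : Type*} [Fintype n]
    [DecidableEq n] [CommRing R] [Invertible (2 : R)] {B : Matrix n n R} (hB : B.IsSymm)
    (hB0 : B ≠ 0) : ∃ v, v ⬝ᵥ B *ᵥ v ≠ 0 := by
  obtain ⟨v, hv⟩ := LinearMap.BilinForm.exists_bilinForm_self_ne_zero
    (B := B.toBilin') (by simpa using hB0)
    (LinearMap.BilinForm.isSymm_iff.1 (isSymm_toBilin'_iff_isSymm.2 hB))
  exact ⟨v, by rwa [toBilin'_apply'] at hv⟩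

theorem Matrix.IsSymm.exists_eq_smul_of_parallel_mulVec {n : Type*} [Fintype n] [DecidableEq n]
    {A B : Matrix n n ℝ} (hA : A.IsSymm) (hB : B.IsSymm) (hB0 : B ≠ 0)
    (h : ∀ v, Parallel (A *ᵥ v) (B *ᵥ v)) : ∃ μ : ℝ, A = μ • B := by
  have : Invertible (2 : ℝ) := invertibleOfNonzero two_ne_zero
  obtain ⟨v₀, hv₀⟩ := hB.exists_dotProduct_mulVec_ne_zero hB0
  set u := B *ᵥ v₀
  have hu : u ≠ 0 := fun hu => hv₀ (by rw [hu, dotProduct_zero])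
  obtain ⟨μ, hμ⟩ := (h v₀).exists_eq_smul hu
  set C := A - μ • B
  have hCv₀ : C *ᵥ v₀ = 0 := by rw [sub_mulVec, smul_mulVec, hμ, sub_self]
  have hC : ∀ v, Parallel (C *ᵥ v) (B *ᵥ v) := fun v i j => by
    simp only [C, sub_mulVec, smul_mulVec, Pi.sub_apply, Pi.smul_apply, smul_eq_mul]
    linear_combination h v i j
  have hCu : ∀ w, Parallel (C *ᵥ w) u := fun w i j => by
    have hadd := hC (v₀ + w) i j
    have hsub := hC (v₀ - w) i j
    simp only [mulVec_add, mulVec_sub, hCv₀, Pi.add_apply, Pi.sub_apply, Pi.zero_apply]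
      at hadd hsub
    linear_combination (hadd - hsub) / 2
  have hC0 : ∀ w, C *ᵥ w = 0 := fun w => by
    obtain ⟨κ, hκ⟩ := (hCu w).exists_eq_smul hu
    have hv₀C : v₀ ⬝ᵥ C *ᵥ w = 0 := by
      have hCsymm : C.IsSymm := hA.sub (hB.smul μ)
      rw [dotProduct_mulVec, ← hCsymm.eq, vecMul_transpose, hCv₀, zero_dotProduct]
    rw [hκ, dotProduct_smul, smul_eq_mul, mul_eq_zero] at hv₀C
    rw [hκ, hv₀C.resolve_right hv₀, zero_smul]
  exact ⟨μ, sub_eq_zero.1 (ext_of_mulVec_single fun j => by rw [hC0, zero_mulVec])⟩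

theorem exists_eq_smul_of_parallel_mulVec {ι n : Type*} [Fintype n] [DecidableEq n]
    {A : ι → Matrix n n ℝ} (hA : ∀ ℓ, (A ℓ).IsSymm)
    (h : ∀ v ℓ k, Parallel (A ℓ *ᵥ v) (A k *ᵥ v)) :
    ∃ (α : ι → ℝ) (H : Matrix n n ℝ), H.IsSymm ∧ ∀ ℓ, A ℓ = α ℓ • H := by
  by_cases hA0 : ∀ ℓ, A ℓ = 0
  · exact ⟨0, 0, isSymm_zero, fun ℓ => by simp [hA0 ℓ]⟩
  obtain ⟨ℓ₀, hℓ₀⟩ := not_forall.1 hA0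
  choose α hα using fun ℓ => (hA ℓ).exists_eq_smul_of_parallel_mulVec (hA ℓ₀) hℓ₀ (h · ℓ ℓ₀)
  exact ⟨α, A ℓ₀, hA ℓ₀, hα⟩

section Hessian

variable {ι : Type*} [Fintype ι] [DecidableEq ι]

noncomputable def hessian (f : (ι → ℝ) → ℝ) (x : ι → ℝ) : Matrix ι ι ℝ :=
  of fun i j => iteratedFDeriv ℝ 2 f x ![Pi.single i 1, Pi.single j 1]

variable {f : (ι → ℝ) → ℝ} {x : ι → ℝ}

theorem hessian_apply (i j : ι) :
    hessian f x i j = fderiv ℝ (fderiv ℝ f) x (Pi.single i 1) (Pi.single j 1) := by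
  simp [hessian, iteratedFDeriv_two_apply]

theorem ContDiffAt.isSymm_hessian (hf : ContDiffAt ℝ 2 f x) : (hessian f x).IsSymm := by
  ext i j
  simp only [transpose_apply, hessian_apply, hf.isSymmSndFDerivAt (by simp) (Pi.single i 1)]

theorem ContDiffAt.hessian_mulVec (hf : ContDiffAt ℝ 2 f x) (v : ι → ℝ) :
    hessian f x *ᵥ v = fun i => fderiv ℝ (fderiv ℝ f) x v (Pi.single i 1) := by
  ext i
  conv_rhs => rw [hf.isSymmSndFDerivAt (by simp), pi_eq_sum_univ' v]
  simp [mulVec, dotProduct, hessian_apply, mul_comm]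

end Hessian

/-- Hessians with rank at most one: if `c : U → ℝᵐ` is `C²` with `Dc(0) = 0` and
`rank (Dc x) ≤ 1` on a neighborhood of `0`, then the Hessians of the components
of `c` at `0` are all multiples of a single symmetric matrix `H`. -/
theorem hessians_rank_at_most_one {n m : ℕ} (U : Set (Fin n → ℝ))
    (hU : IsOpen U) (hU0 : (0 : Fin n → ℝ) ∈ U)
    (c : Fin m → (Fin n → ℝ) → ℝ)
    (hC2 : ∀ ℓ, ContDiffOn ℝ 2 (c ℓ) U)
    (hD0 : ∀ ℓ, fderiv ℝ (c ℓ) 0 = 0)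
    (hrank : ∀ x ∈ U,
      (Matrix.of fun (ℓ : Fin m) (i : Fin n) =>
        fderiv ℝ (c ℓ) x (Pi.single i 1)).rank ≤ 1) :
    ∃ (α : Fin m → ℝ) (H : Matrix (Fin n) (Fin n) ℝ), H.IsSymm ∧
      ∀ ℓ, (Matrix.of fun (i j : Fin n) =>
        iteratedFDeriv ℝ 2 (c ℓ) 0 ![Pi.single i 1, Pi.single j 1]) = α ℓ • H := by
  have hU_nhds : U ∈ 𝓝 0 := hU.mem_nhds hU0
  have hc : ∀ ℓ, ContDiffAt ℝ 2 (c ℓ) 0 := fun ℓ => (hC2 ℓ).contDiffAt hU_nhds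
  have hJ : HasFDerivAt (fun x ℓ i => fderiv ℝ (c ℓ) x (Pi.single i 1))
      (ContinuousLinearMap.pi fun ℓ => ContinuousLinearMap.pi fun i =>
        (ContinuousLinearMap.apply ℝ ℝ (Pi.single i 1)).comp (fderiv ℝ (fderiv ℝ (c ℓ)) 0)) 0 :=
    hasFDerivAt_pi.2 fun ℓ => hasFDerivAt_pi.2 fun i =>
      ((ContinuousLinearMap.apply ℝ ℝ (Pi.single i 1)).hasFDerivAt.comp 0
        (((hc ℓ).fderiv_right (m := 1) le_rfl).differentiableAt one_ne_zero).hasFDerivAt :)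
  have hpar (v : Fin n → ℝ) (ℓ k : Fin m) :
      Parallel (hessian (c ℓ) 0 *ᵥ v) (hessian (c k) 0 *ᵥ v) := by
    have hJv := hJ.apply_mem_of_eventually_mem (by ext; simp [hD0]) isClosed_setOf_forall_parallel
      (fun t M hM ℓ k => (hM ℓ k).smul t t)
      (eventually_of_mem hU_nhds fun x hx => parallel_of_rank_le_one (hrank x hx))
      v ℓ k
    simpa [(hc _).hessian_mulVec] using hJv
  exact exists_eq_smul_of_parallel_mulVec (fun ℓ => (hc ℓ).isSymm_hessian) hpar
end

section
/- (Dines' theorem) Let A, B be symmetric n×n real matrices. Then the set R(A,B) = {(xᵀAx, xᵀBx) : x ∈ R^n} is a convex subset of R². -/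
/-!
The joint range is a cone, so it suffices to write `a • (Q₁ x, Q₂ x) + b • (Q₁ y, Q₂ y)` with
`a, b > 0` as the value at some `α • x + β • y`. That value is `L (α², β², αβ)` for the linear map
`L (X, Y, Z) = (X Qᵢ x + Y Qᵢ y + Z polar Qᵢ x y)ᵢ : ℝ³ → ℝ²`, while the target is `L (a, b, 0)`.
Reading `(X, Y, Z)` as the symmetric matrix `[[X, Z], [Z, Y]]`, the line through `(a, b, 0)` in the
direction of a nonzero kernel vector of `L` starts inside the cone of positive semidefinite matrices
and must leave it; where it crosses the boundary the matrix has rank one, i.e. is `(α², β², αβ)`.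
-/

open scoped Matrix

theorem QuadraticMap.map_smul_add_smul {R M N : Type*} [CommRing R] [AddCommGroup M]
    [AddCommGroup N] [Module R M] [Module R N] (Q : QuadraticMap R M N) (α β : R) (x y : M) :
    Q (α • x + β • y) = (α * α) • Q x + (β * β) • Q y + (α * β) • polar Q x y := by
  rw [QuadraticMap.map_add (⇑Q), Q.map_smul, Q.map_smul, polar_smul_left, polar_smul_right,
    smul_smul]

theorem Matrix.toQuadraticForm'_apply {n : Type*} [Fintype n] [DecidableEq n] {R : Type*}
    [CommRing R] (A : Matrix n n R) (x : n → R) : A.toQuadraticForm' x = x ⬝ᵥ A *ᵥ x := by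
  simp [Matrix.toQuadraticForm', Matrix.toLinearMap₂'_apply']

theorem exists_ne_zero_dotProduct_eq_zero_of_two_lt_card {K m : Type*} [Field K] [Fintype m]
    (hm : 2 < Fintype.card m) (u w : m → K) : ∃ v ≠ 0, u ⬝ᵥ v = 0 ∧ w ⬝ᵥ v = 0 := by
  obtain ⟨v, hv, hv0⟩ := (Submodule.ne_bot_iff _).1 <|
    (Matrix.of ![u, w]).mulVecLin.ker_ne_bot_of_finrank_lt (by simpa using hm)
  exact ⟨v, hv0, congr_fun hv 0, congr_fun hv 1⟩

theorem exists_sq_eq_sq_eq_mul_eq {X Y Z : ℝ} (hX : 0 ≤ X) (hY : 0 ≤ Y) (h : X * Y = Z ^ 2) :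
    ∃ α β : ℝ, α ^ 2 = X ∧ β ^ 2 = Y ∧ α * β = Z := by
  rcases hY.eq_or_lt with rfl | hY
  · exact ⟨√X, 0, Real.sq_sqrt hX, zero_pow two_ne_zero, by simpa [eq_comm] using h⟩
  · have hsqrt : √Y ≠ 0 := (Real.sqrt_pos.2 hY).ne'
    refine ⟨Z / √Y, √Y, ?_, Real.sq_sqrt hY.le, div_mul_cancel₀ Z hsqrt⟩
    rw [div_pow, Real.sq_sqrt hY.le, ← h, mul_div_cancel_right₀ X hY.ne']

theorem nonneg_and_nonneg_and_mul_eq_sq_of_min_eq_zero {X Y Z : ℝ}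
    (h : min (X + Y) (X * Y - Z ^ 2) = 0) : 0 ≤ X ∧ 0 ≤ Y ∧ X * Y = Z ^ 2 := by
  rcases min_eq_iff.1 h with ⟨htr, hdet⟩ | ⟨hdet, htr⟩
  · have hX : X = 0 := by nlinarith [sq_nonneg Z]
    have hZ : Z = 0 := by nlinarith [sq_nonneg Z]
    subst hX hZ
    exact ⟨le_rfl, by linarith, by linarith⟩
  · refine ⟨?_, ?_, by linarith⟩ <;> nlinarith [sq_nonneg Z]

theorem exists_mul_le_sq_on_line (a b : ℝ) {v : Fin 3 → ℝ} (hv : v ≠ 0) :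
    ∃ s, (a + s * v 0) * (b + s * v 1) ≤ (s * v 2) ^ 2 := by
  by_cases h0 : v 0 = 0
  · by_cases h1 : v 1 = 0
    · have h2 : v 2 ≠ 0 := fun h2 => hv <| by ext i; fin_cases i <;> assumption
      refine ⟨(a + b) / v 2, ?_⟩
      rw [h0, h1, div_mul_cancel₀ _ h2]
      nlinarith [sq_nonneg (a + b), sq_nonneg a, sq_nonneg b]
    · refine ⟨-b / v 1, ?_⟩
      rw [div_mul_cancel₀ _ h1]
      simp [sq_nonneg]
  · refine ⟨-a / v 0, ?_⟩
    rw [div_mul_cancel₀ _ h0]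
    simp [sq_nonneg]

theorem exists_sq_eq_sq_eq_mul_eq_on_line {a b : ℝ} (ha : 0 < a) (hb : 0 < b) {v : Fin 3 → ℝ}
    (hv : v ≠ 0) :
    ∃ s α β : ℝ, α ^ 2 = a + s * v 0 ∧ β ^ 2 = b + s * v 1 ∧ α * β = s * v 2 := by
  obtain ⟨s₀, hs₀⟩ := exists_mul_le_sq_on_line a b hv
  -- `min (trace, det)` vanishes exactly on the boundary of the positive semidefinite cone.
  set φ : ℝ → ℝ := fun s =>
    min ((a + s * v 0) + (b + s * v 1)) ((a + s * v 0) * (b + s * v 1) - (s * v 2) ^ 2)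
  have hφ : Continuous φ := by fun_prop
  have hφ0 : 0 ≤ φ 0 := by simp only [φ]; exact le_min (by linarith) (by simpa using (mul_pos ha hb).le)
  have hφs₀ : φ s₀ ≤ 0 := (min_le_right _ _).trans (sub_nonpos.2 hs₀)
  obtain ⟨s, -, hs⟩ := intermediate_value_uIcc hφ.continuousOn
    (Set.mem_uIcc.2 (Or.inr ⟨hφs₀, hφ0⟩))
  obtain ⟨hX, hY, hXY⟩ := nonneg_and_nonneg_and_mul_eq_sq_of_min_eq_zero hs
  exact ⟨s, exists_sq_eq_sq_eq_mul_eq hX hY hXY⟩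

theorem QuadraticMap.convex_range_prod {M : Type*} [AddCommGroup M] [Module ℝ M]
    (Q₁ Q₂ : QuadraticMap ℝ M ℝ) : Convex ℝ (Set.range fun x => (Q₁ x, Q₂ x)) := by
  refine convex_iff_forall_pos.2 ?_
  rintro _ ⟨x, rfl⟩ _ ⟨y, rfl⟩ a b ha hb -
  obtain ⟨v, hv, h₁, h₂⟩ := exists_ne_zero_dotProduct_eq_zero_of_two_lt_card (by simp)
    ![Q₁ x, Q₁ y, polar Q₁ x y] ![Q₂ x, Q₂ y, polar Q₂ x y]
  obtain ⟨s, α, β, hα, hβ, hαβ⟩ := exists_sq_eq_sq_eq_mul_eq_on_line ha hb hv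
  have map_eq (Q : QuadraticMap ℝ M ℝ) (hQ : ![Q x, Q y, polar Q x y] ⬝ᵥ v = 0) :
      Q (α • x + β • y) = a * Q x + b * Q y := by
    simp only [dotProduct, Fin.sum_univ_three, Matrix.cons_val] at hQ
    rw [map_smul_add_smul, smul_eq_mul, smul_eq_mul, smul_eq_mul]
    linear_combination Q x * hα + Q y * hβ + polar Q x y * hαβ + s * hQ
  exact ⟨α • x + β • y, Prod.ext (map_eq Q₁ h₁) (map_eq Q₂ h₂)⟩

theorem dines_theorem_general {n : ℕ} (A B : Matrix (Fin n) (Fin n) ℝ) :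
    Convex ℝ {p : ℝ × ℝ | ∃ x : Fin n → ℝ,
      p = (x ⬝ᵥ (A *ᵥ x), x ⬝ᵥ (B *ᵥ x))} := by
  convert QuadraticMap.convex_range_prod A.toQuadraticForm' B.toQuadraticForm' using 1
  ext p
  simp [Matrix.toQuadraticForm'_apply, eq_comm]

/-- Dines' theorem: the joint range `{(xᵀAx, xᵀBx) : x ∈ ℝⁿ}` of two quadratic
forms given by symmetric matrices is a convex subset of the plane. -/
theorem dines_theorem {n : ℕ} (A B : Matrix (Fin n) (Fin n) ℝ)
    (hA : A.IsSymm) (hB : B.IsSymm) :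
    Convex ℝ {p : ℝ × ℝ | ∃ x : Fin n → ℝ,
      p = (x ⬝ᵥ (A *ᵥ x), x ⬝ᵥ (B *ᵥ x))} :=
  dines_theorem_general A B
end

section
/- Let A, B be symmetric n×n real matrices such that for every x ≠ 0 either xᵀAx ≠ 0 or xᵀBx ≠ 0. Then the joint range R(A,B) = {(xᵀAx, xᵀBx) : x ∈ R^n} is either all of R² or a closed convex cone containing no line through the origin other than possibly trivially (an angular sector of angle less than π). -/
/-!
View `x ↦ (xᵀAx, xᵀBx)` as a quadratic map `Q` into `ℝ²`; its range `R` is a cone.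

Convexity (Dines): replacing `x, y` by `x + s y, -s x + y` multiplies `Q x + Q y` by `1 + s²`,
and for a suitable `s` the two new values are collinear, so their sum lies in the cone.

Closedness: an anisotropic continuous `Q` satisfies `‖Q x‖ ≥ δ ‖x‖²`, so it is a proper map.

Pointedness: if `±p ∈ R` with `p ≠ 0` and `R ≠ ℝ²`, then `R` lies on one side of the line `ℝ p`.
Along `s x₀ + x₁`, where `Q x₀ = p` and `Q x₁ = -p`, this forces `Q` to stay on that line, and
a root of the resulting quadratic in `s` is a nonzero isotropic vector.
-/

open scoped Matrix

open Set Filter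

def cross (p q : ℝ × ℝ) : ℝ := p.1 * q.2 - p.2 * q.1

lemma exists_eq_smul_of_cross_eq_zero {p q : ℝ × ℝ} (hp : p ≠ 0) (h : cross p q = 0) :
    ∃ t : ℝ, q = t • p := by
  obtain ⟨p₁, p₂⟩ := p
  obtain ⟨q₁, q₂⟩ := q
  have hpp : p₁ ^ 2 + p₂ ^ 2 ≠ 0 := by
    contrapose! hp
    simp only [Prod.mk_eq_zero]
    constructor <;> nlinarith [sq_nonneg p₁, sq_nonneg p₂]
  refine ⟨(p₁ * q₁ + p₂ * q₂) / (p₁ ^ 2 + p₂ ^ 2), Prod.ext ?_ ?_⟩ <;>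
    simp only [cross, Prod.smul_mk, smul_eq_mul] at h ⊢ <;> field_simp
  · linear_combination (-p₂) * h
  · linear_combination p₁ * h

lemma exists_mul_one_sub_sq_add_mul_eq_zero (a b : ℝ) :
    ∃ s : ℝ, a * (1 - s ^ 2) + b * s = 0 := by
  rcases eq_or_ne a 0 with rfl | ha
  · exact ⟨0, by ring⟩
  have hdiscrim : 0 ≤ discrim (-a) b a := by
    unfold discrim
    nlinarith [sq_nonneg a, sq_nonneg b]
  obtain ⟨s, hs⟩ := exists_quadratic_eq_zero (a := -a) (b := b) (c := a) (neg_ne_zero.2 ha)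
    ⟨√(discrim (-a) b a), (Real.mul_self_sqrt hdiscrim).symm⟩
  exact ⟨s, by linear_combination hs⟩

section Cone

variable {S : Set (ℝ × ℝ)}

lemma smul_mem_of_mem_of_neg_mem (hS : ∀ p ∈ S, ∀ t : ℝ, 0 ≤ t → t • p ∈ S) {p : ℝ × ℝ}
    (hp : p ∈ S) (hnp : -p ∈ S) (t : ℝ) : t • p ∈ S := by
  rcases le_total 0 t with ht | ht
  · exact hS p hp t ht
  · simpa using hS (-p) hnp (-t) (neg_nonneg.2 ht)

lemma add_mem_of_cross_eq_zero (hS : ∀ p ∈ S, ∀ t : ℝ, 0 ≤ t → t • p ∈ S) {a b : ℝ × ℝ}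
    (ha : a ∈ S) (hb : b ∈ S) (h : cross a b = 0) : a + b ∈ S := by
  rcases eq_or_ne a 0 with rfl | ha₀
  · simpa using hb
  obtain ⟨t, rfl⟩ := exists_eq_smul_of_cross_eq_zero ha₀ h
  rcases le_or_gt (-1) t with ht | ht
  · simpa [add_smul, add_comm] using hS a ha (1 + t) (by linarith)
  · convert hS _ hb ((1 + t) / t) (div_nonneg_of_nonpos (by linarith) (by linarith)) using 1
    rw [smul_smul, div_mul_cancel₀ _ (by linarith : t ≠ 0), add_smul, one_smul]

lemma eq_univ_of_cross_pos_of_cross_neg (hS : ∀ p ∈ S, ∀ t : ℝ, 0 ≤ t → t • p ∈ S)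
    (hadd : ∀ p ∈ S, ∀ q ∈ S, p + q ∈ S) {p u v : ℝ × ℝ} (hp : p ∈ S) (hnp : -p ∈ S)
    (hu : u ∈ S) (hv : v ∈ S) (hpu : 0 < cross p u) (hpv : cross p v < 0) : S = univ := by
  have hp₀ : p ≠ 0 := by rintro rfl; simp [cross] at hpu
  refine eq_univ_of_forall fun w => ?_
  -- `w` is a nonnegative multiple of `u` or of `v` plus a multiple of `p`
  obtain ⟨r, hr, hrw⟩ : ∃ r ∈ S, cross p r ≠ 0 ∧ 0 ≤ cross p w / cross p r := by
    rcases le_total 0 (cross p w) with hw | hw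
    · exact ⟨u, hu, hpu.ne', div_nonneg hw hpu.le⟩
    · exact ⟨v, hv, hpv.ne, div_nonneg_of_nonpos hw hpv.le⟩
  set k := cross p w / cross p r
  obtain ⟨t, ht⟩ : ∃ t : ℝ, w - k • r = t • p := by
    refine exists_eq_smul_of_cross_eq_zero hp₀ ?_
    have : k * cross p r = cross p w := div_mul_cancel₀ _ hrw.1
    simp only [cross, Prod.fst_sub, Prod.snd_sub, Prod.smul_fst, Prod.smul_snd,
      smul_eq_mul] at this ⊢
    linear_combination -this
  rw [sub_eq_iff_eq_add] at ht
  rw [ht]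
  exact hadd _ (smul_mem_of_mem_of_neg_mem hS hp hnp t) _ (hS r hr k hrw.2)

end Cone

namespace QuadraticMap

section Module

variable {V E : Type*} [AddCommGroup V] [Module ℝ V] [AddCommGroup E] [Module ℝ E]

lemma map_smul_add_smul_s14 (Q : QuadraticMap ℝ V E) (a b : ℝ) (x y : V) :
    Q (a • x + b • y) = (a * a) • Q x + (a * b) • polar Q x y + (b * b) • Q y := by
  rw [QuadraticMap.map_add Q, QuadraticMap.map_smul, QuadraticMap.map_smul, polar_smul_left,
    polar_smul_right, smul_smul]
  abel

lemma smul_mem_range (Q : QuadraticMap ℝ V E) (p : E) (hp : p ∈ range Q) (t : ℝ)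
    (ht : 0 ≤ t) : t • p ∈ range Q := by
  obtain ⟨x, rfl⟩ := hp
  exact ⟨√t • x, by rw [QuadraticMap.map_smul, Real.mul_self_sqrt ht]⟩

end Module

section Plane

variable {V : Type*} [AddCommGroup V] [Module ℝ V] (Q : QuadraticMap ℝ V (ℝ × ℝ))

lemma add_mem_range {p q : ℝ × ℝ} (hp : p ∈ range Q) (hq : q ∈ range Q) : p + q ∈ range Q := by
  obtain ⟨x, rfl⟩ := hp
  obtain ⟨y, rfl⟩ := hq
  set b := polar Q x y
  obtain ⟨s, hs⟩ :=
    exists_mul_one_sub_sq_add_mul_eq_zero (cross (Q x) (Q y)) (cross b (Q x + Q y))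
  have h₁ : Q (x + s • y) = Q x + s • b + (s * s) • Q y := by
    simpa using map_smul_add_smul_s14 Q 1 s x y
  have h₂ : Q ((-s) • x + y) = (s * s) • Q x + (-s) • b + Q y := by
    simpa using map_smul_add_smul_s14 Q (-s) 1 x y
  have hpos : 0 < 1 + s * s := by nlinarith [mul_self_nonneg s]
  have hsum : Q (x + s • y) + Q ((-s) • x + y) = (1 + s * s) • (Q x + Q y) := by
    rw [h₁, h₂]; module
  have hcross : cross (Q (x + s • y)) (Q ((-s) • x + y)) = 0 := by
    rw [h₁, h₂]
    simp only [cross, Prod.fst_add, Prod.snd_add, Prod.smul_fst, Prod.smul_snd,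
      smul_eq_mul] at hs ⊢
    linear_combination (1 + s ^ 2) * hs
  have := smul_mem_range Q _ (add_mem_of_cross_eq_zero Q.smul_mem_range
    (mem_range_self _) (mem_range_self _) hcross) _ (inv_nonneg.2 hpos.le)
  rwa [hsum, smul_smul, inv_mul_cancel₀ hpos.ne', one_smul] at this

lemma convex_range : Convex ℝ (range Q) := fun _ hp _ hq _ _ ha hb _ =>
  add_mem_range Q (smul_mem_range Q _ hp _ ha) (smul_mem_range Q _ hq _ hb)

lemma not_anisotropic_of_cross_nonneg {p : ℝ × ℝ} (hp : p ≠ 0) {x₀ x₁ : V} (hx₀ : Q x₀ = p)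
    (hx₁ : Q x₁ = -p) (hnonneg : ∀ x, 0 ≤ cross p (Q x)) : ¬ Q.Anisotropic := by
  set c := polar Q x₀ x₁
  have hline : ∀ s : ℝ, Q (s • x₀ + x₁) = (s * s - 1) • p + s • c := by
    intro s
    have := map_smul_add_smul_s14 Q s 1 x₀ x₁
    rw [one_smul, hx₀, hx₁] at this
    rw [this]
    module
  have hcross : ∀ s : ℝ, cross p (Q (s • x₀ + x₁)) = s * cross p c := by
    intro s
    rw [hline]
    simp only [cross, Prod.fst_add, Prod.snd_add, Prod.smul_fst, Prod.smul_snd, smul_eq_mul]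
    ring
  obtain ⟨μ, hμ⟩ : ∃ μ : ℝ, c = μ • p := by
    refine exists_eq_smul_of_cross_eq_zero hp (le_antisymm ?_ ?_)
    · linarith [hcross (-1) ▸ hnonneg ((-1 : ℝ) • x₀ + x₁)]
    · linarith [hcross 1 ▸ hnonneg ((1 : ℝ) • x₀ + x₁)]
  obtain ⟨s, hs⟩ := exists_mul_one_sub_sq_add_mul_eq_zero 1 (-μ)
  intro hQ
  have hz : s • x₀ + x₁ = 0 := by
    refine hQ _ ?_
    rw [hline, hμ, smul_smul, ← add_smul]
    exact smul_eq_zero_of_left (by linear_combination -hs) p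
  have : (1 + s * s) • p = 0 := by
    rw [← neg_eq_of_add_eq_zero_right hz, QuadraticMap.map_neg, QuadraticMap.map_smul,
      hx₀] at hx₁
    rw [add_smul, one_smul, hx₁, add_neg_cancel]
  exact hp ((smul_eq_zero.1 this).resolve_left (by nlinarith [mul_self_nonneg s]))

lemma range_inter_neg_subset (hQ : Q.Anisotropic) (hU : range Q ≠ univ) :
    range Q ∩ -range Q ⊆ {0} := by
  rintro p ⟨⟨x₀, hx₀⟩, ⟨x₁, hx₁⟩⟩
  by_contra hp
  by_cases hsigns : (∃ u ∈ range Q, 0 < cross p u) ∧ ∃ v ∈ range Q, cross p v < 0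
  · obtain ⟨⟨u, hu, hpu⟩, ⟨v, hv, hpv⟩⟩ := hsigns
    exact hU (eq_univ_of_cross_pos_of_cross_neg Q.smul_mem_range
      (fun _ hp _ hq => add_mem_range Q hp hq) ⟨x₀, hx₀⟩ ⟨x₁, hx₁⟩ hu hv hpu hpv)
  rw [not_and_or] at hsigns
  push Not at hsigns
  rcases hsigns with hnonpos | hnonneg
  · refine not_anisotropic_of_cross_nonneg Q (neg_ne_zero.2 hp) hx₁ (by rw [hx₀, neg_neg])
      (fun x => ?_) hQ
    have := hnonpos _ (mem_range_self x)
    simp only [cross, Prod.fst_neg, Prod.snd_neg] at this ⊢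
    linarith
  · exact not_anisotropic_of_cross_nonneg Q hp hx₀ hx₁ (fun x => hnonneg _ (mem_range_self x)) hQ

end Plane

section Topology

variable {V E : Type*} [NormedAddCommGroup V] [NormedSpace ℝ V] [ProperSpace V]
  [NormedAddCommGroup E] [NormedSpace ℝ E] (Q : QuadraticMap ℝ V E)

lemma exists_pos_mul_sq_le_norm (hQ : Q.Anisotropic) (hc : Continuous Q) :
    ∃ δ > 0, ∀ x, δ * ‖x‖ ^ 2 ≤ ‖Q x‖ := by
  rcases subsingleton_or_nontrivial V with hV | hV
  · exact ⟨1, one_pos, fun x => by simp [Subsingleton.elim x 0]⟩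
  obtain ⟨u₀, hu₀, hmin⟩ := (isCompact_sphere (0 : V) 1).exists_isMinOn
    (NormedSpace.sphere_nonempty.2 zero_le_one) hc.norm.continuousOn
  have hu₀ : u₀ ≠ 0 := ne_zero_of_mem_unit_sphere ⟨u₀, hu₀⟩
  refine ⟨‖Q u₀‖, norm_pos_iff.2 fun h => hu₀ (hQ _ h), fun x => ?_⟩
  rcases eq_or_ne x 0 with rfl | hx
  · simp
  have hx' : ‖x‖ ≠ 0 := norm_ne_zero_iff.2 hx
  have hu : ‖x‖⁻¹ • x ∈ Metric.sphere (0 : V) 1 := by simp [norm_smul, hx']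
  have hQx : Q x = (‖x‖ * ‖x‖) • Q (‖x‖⁻¹ • x) := by
    rw [← QuadraticMap.map_smul, smul_smul, mul_inv_cancel₀ hx', one_smul]
  rw [hQx, norm_smul, Real.norm_of_nonneg (mul_self_nonneg _), pow_two, mul_comm]
  exact mul_le_mul_of_nonneg_left (hmin hu) (mul_self_nonneg _)

lemma isClosed_range [ProperSpace E] (hQ : Q.Anisotropic) (hc : Continuous Q) :
    IsClosed (range Q) := by
  obtain ⟨δ, hδ, hle⟩ := exists_pos_mul_sq_le_norm Q hQ hc
  have hproper : Tendsto Q (cocompact V) (cocompact E) := by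
    rw [← Metric.cobounded_eq_cocompact, ← Metric.cobounded_eq_cocompact,
      ← tendsto_norm_atTop_iff_cobounded]
    exact tendsto_atTop_mono hle
      (((tendsto_pow_atTop two_ne_zero).comp tendsto_norm_cobounded_atTop).const_mul_atTop hδ)
  exact (isProperMap_iff_tendsto_cocompact.2 ⟨hc, hproper⟩).isClosedMap.isClosed_range

end Topology

end QuadraticMap

namespace Matrix

variable {n : Type*} [Fintype n] [DecidableEq n]

def pairQuadraticMap (A B : Matrix n n ℝ) : QuadraticMap ℝ (n → ℝ) (ℝ × ℝ) :=
  (LinearMap.inl ℝ ℝ ℝ).compQuadraticMap A.toQuadraticForm' +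
    (LinearMap.inr ℝ ℝ ℝ).compQuadraticMap B.toQuadraticForm'

lemma pairQuadraticMap_apply (A B : Matrix n n ℝ) (x : n → ℝ) :
    pairQuadraticMap A B x = (x ⬝ᵥ A *ᵥ x, x ⬝ᵥ B *ᵥ x) := by
  simp [pairQuadraticMap, toQuadraticForm', toLinearMap₂'_apply']

lemma continuous_pairQuadraticMap (A B : Matrix n n ℝ) :
    Continuous (pairQuadraticMap A B) := by
  simp_rw [funext (pairQuadraticMap_apply A B)]
  fun_prop

end Matrix

theorem dines_sector_general {n : ℕ} (A B : Matrix (Fin n) (Fin n) ℝ)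
    (h : ∀ x : Fin n → ℝ, x ≠ 0 →
      x ⬝ᵥ (A *ᵥ x) ≠ 0 ∨ x ⬝ᵥ (B *ᵥ x) ≠ 0) :
    let R : Set (ℝ × ℝ) := {p | ∃ x : Fin n → ℝ,
      p = (x ⬝ᵥ (A *ᵥ x), x ⬝ᵥ (B *ᵥ x))}
    R = Set.univ ∨
      (IsClosed R ∧ Convex ℝ R ∧
        (∀ p ∈ R, ∀ t : ℝ, 0 ≤ t → t • p ∈ R) ∧
        R ∩ (-R) ⊆ {(0, 0)}) := by
  intro R
  set Q := Matrix.pairQuadraticMap A B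
  have hR : R = range Q := by
    ext p
    simp [R, Q, Matrix.pairQuadraticMap_apply, eq_comm]
  have hQ : Q.Anisotropic := by
    intro x hx
    by_contra hx₀
    simp only [Q, Matrix.pairQuadraticMap_apply, Prod.mk_eq_zero] at hx
    exact (h x hx₀).elim (· hx.1) (· hx.2)
  rw [hR]
  exact (eq_or_ne (range Q) univ).imp id fun hU =>
    ⟨Q.isClosed_range hQ (Matrix.continuous_pairQuadraticMap A B), Q.convex_range,
      Q.smul_mem_range, Q.range_inter_neg_subset hQ hU⟩

/-- If the quadratic forms of the symmetric matrices `A` and `B` have no common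
nontrivial zero, then their joint range is either all of `ℝ²` or a closed
convex pointed cone (a closed angular sector of angle less than `π`). -/
theorem dines_sector {n : ℕ} (A B : Matrix (Fin n) (Fin n) ℝ)
    (hA : A.IsSymm) (hB : B.IsSymm)
    (h : ∀ x : Fin n → ℝ, x ≠ 0 →
      x ⬝ᵥ (A *ᵥ x) ≠ 0 ∨ x ⬝ᵥ (B *ᵥ x) ≠ 0) :
    let R : Set (ℝ × ℝ) := {p | ∃ x : Fin n → ℝ,
      p = (x ⬝ᵥ (A *ᵥ x), x ⬝ᵥ (B *ᵥ x))}
    R = Set.univ ∨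
      (IsClosed R ∧ Convex ℝ R ∧
        (∀ p ∈ R, ∀ t : ℝ, 0 ≤ t → t • p ∈ R) ∧
        R ∩ (-R) ⊆ {(0, 0)}) :=
  dines_sector_general A B h
end

section
/- Let H_1, ..., H_m be symmetric n×n matrices, all nonzero, such that for all v ∈ R^n the matrix with columns H_1 v, ..., H_m v has rank at most one. If H_1 e_1 = d e_1 with d ≠ 0 (after diagonalizing H_1), then every H_j has block form H_j = [[α_j, 0],[0, H_j']] with α_j ∈ R and H_j' symmetric of size (n−1)×(n−1). -/
/-!
For `v = e₁` the matrix in the rank condition has the first columns of the `H j` as its columns.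
Having rank at most one, its `2 × 2` minors vanish; since its column `0` is `d e₁` with `d ≠ 0`,
every other column vanishes off row `0` as well. Symmetry carries this from first columns to
first rows.
-/

open scoped Matrix

namespace Matrix

variable {m n K : Type*} [Finite m] [Fintype n] [Field K]

theorem mul_eq_mul_of_rank_le_one {A : Matrix m n K} (hA : A.rank ≤ 1) (i i' : m) (j j' : n) :
    A i j * A i' j' = A i j' * A i' j := by
  rw [rank_eq_finrank_span_cols, Submodule.finrank_le_one_iff_isPrincipal] at hA
  obtain ⟨v, hv⟩ := hA.principal
  have hcol (k : n) : ∃ c : K, c • v = A.col k := by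
    rw [← Submodule.mem_span_singleton, ← hv]
    exact Submodule.subset_span ⟨k, rfl⟩
  obtain ⟨c, hc⟩ := hcol j
  obtain ⟨c', hc'⟩ := hcol j'
  have hj (r : m) : A r j = c * v r := (congrFun hc r).symm
  have hj' (r : m) : A r j' = c' * v r := (congrFun hc' r).symm
  rw [hj, hj, hj', hj']
  ring

theorem eq_zero_of_rank_le_one {A : Matrix m n K} (hA : A.rank ≤ 1) {i i' : m} {j k : n}
    (hpivot : A i' k ≠ 0) (hzero : A i k = 0) : A i j = 0 := by
  have hminor := mul_eq_mul_of_rank_le_one hA i i' j k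
  rw [hzero, zero_mul] at hminor
  exact (mul_eq_zero.mp hminor).resolve_right hpivot

end Matrix

theorem rank_one_columns_block_form_general {n m : ℕ}
    (H : Fin (m + 1) → Matrix (Fin (n + 1)) (Fin (n + 1)) ℝ)
    (hsymm : ∀ j, (H j).IsSymm)
    (hrank : ∀ v : Fin (n + 1) → ℝ,
      (Matrix.of fun (i : Fin (n + 1)) (j : Fin (m + 1)) => (H j *ᵥ v) i).rank ≤ 1)
    (d : ℝ) (hd : d ≠ 0)
    (heig : H 0 *ᵥ (Pi.single 0 1 : Fin (n + 1) → ℝ) = d • (Pi.single 0 1 : Fin (n + 1) → ℝ)) :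
    ∃ α : Fin (m + 1) → ℝ, ∀ j, H j 0 0 = α j ∧
      ∀ i : Fin (n + 1), i ≠ 0 → H j i 0 = 0 ∧ H j 0 i = 0 := by
  have hfirstCols := hrank (Pi.single 0 1)
  simp only [Matrix.mulVec_single_one] at hfirstCols heig
  have hcol0 (i : Fin (n + 1)) : H 0 i 0 = d * (Pi.single 0 1 : Fin (n + 1) → ℝ) i := by
    simpa using congrFun heig i
  refine ⟨fun j => H j 0 0, fun j => ⟨rfl, fun i hi => ?_⟩⟩
  have hij : H j i 0 = 0 := Matrix.eq_zero_of_rank_le_one hfirstCols (i' := 0) (k := 0)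
    (by simpa [hcol0] using hd) (by simp [hcol0, hi])
  exact ⟨hij, (hsymm j).apply i 0 ▸ hij⟩

/-- The key inductive step of the rank-one columns lemma: if the nonzero
symmetric matrices `H j` are such that the matrix with columns `H j *ᵥ v` has
rank at most one for all `v`, and `H 0` has `e₁` as an eigenvector with nonzero
eigenvalue `d`, then every `H j` has the block form `[[αⱼ, 0], [0, Hⱼ']]`. -/
theorem rank_one_columns_block_form {n m : ℕ}
    (H : Fin (m + 1) → Matrix (Fin (n + 1)) (Fin (n + 1)) ℝ)
    (hsymm : ∀ j, (H j).IsSymm) (hne : ∀ j, H j ≠ 0)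
    (hrank : ∀ v : Fin (n + 1) → ℝ,
      (Matrix.of fun (i : Fin (n + 1)) (j : Fin (m + 1)) => (H j *ᵥ v) i).rank ≤ 1)
    (d : ℝ) (hd : d ≠ 0)
    (heig : H 0 *ᵥ (Pi.single 0 1 : Fin (n + 1) → ℝ) = d • (Pi.single 0 1 : Fin (n + 1) → ℝ)) :
    ∃ α : Fin (m + 1) → ℝ, ∀ j, H j 0 0 = α j ∧
      ∀ i : Fin (n + 1), i ≠ 0 → H j i 0 = 0 ∧ H j 0 i = 0 :=
  rank_one_columns_block_form_general H hsymm hrank d hd heig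
end
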